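/- arXiv:1904.00211 — 2 statements merged into one kernel-verified Lean document; each statement's English description precedes it below -/
import Mathlib

section
/- Deterministic sandwich-variance decomposition: let θ̂, θ ∈ ℝ^p with ‖θ̂‖₀ ≤ m and ‖θ̂ − θ‖₀ ≤ m', and let Ω̂, Ω̃, Ω be symmetric p×p real matrices with Ω positive semidefinite. Then |θ̂'Ω̂θ̂ − θ'Ωθ| ≤ ‖θ̂‖²·sup{|ξ'(Ω̂−Ω̃)ξ| : ‖ξ‖=1, ‖ξ‖₀ ≤ m} + ‖θ̂‖₁²·max_{i,j}|(Ω̃−Ω)_{ij}| + ‖θ̂−θ‖²·sup{ξ'Ωξ : ‖ξ‖=1, ‖ξ‖₀ ≤ m'} + 2‖Ωθ‖·‖θ̂−θ‖. -/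
noncomputable section
open Matrix

/-- Euclidean norm. -/
def vnorm {ι : Type*} [Fintype ι] (v : ι → ℝ) : ℝ := Real.sqrt (∑ i, v i ^ 2)

/-- ℓ1 norm. -/
def v1norm {ι : Type*} [Fintype ι] (v : ι → ℝ) : ℝ := ∑ i, |v i|

/-- ℓ0 "norm": number of nonzero coordinates. -/
def v0norm {ι : Type*} [Fintype ι] (v : ι → ℝ) : ℕ := (Function.support v).ncard

namespace SandwichAux

variable {ι : Type*} [Fintype ι]

lemma vnorm_nonneg (v : ι → ℝ) : 0 ≤ vnorm v := Real.sqrt_nonneg _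

lemma vnorm_sq (v : ι → ℝ) : vnorm v ^ 2 = ∑ i, v i ^ 2 :=
  Real.sq_sqrt (Finset.sum_nonneg fun _ _ => sq_nonneg _)

lemma vnorm_eq_zero {v : ι → ℝ} (h : vnorm v = 0) : v = 0 := by
  have h2 : ∑ i, v i ^ 2 = 0 := by
    have := congrArg (· ^ 2) h
    simpa [vnorm_sq] using this
  funext i
  have := (Finset.sum_eq_zero_iff_of_nonneg (fun i _ => sq_nonneg (v i))).1 h2 i (Finset.mem_univ i)
  simpa using pow_eq_zero_iff (n := 2) (by norm_num) |>.1 this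

lemma vnorm_smul (c : ℝ) (v : ι → ℝ) : vnorm (c • v) = |c| * vnorm v := by
  unfold vnorm
  have : ∑ i, (c • v) i ^ 2 = c ^ 2 * ∑ i, v i ^ 2 := by
    rw [Finset.mul_sum]; refine Finset.sum_congr rfl fun i _ => ?_
    simp [Pi.smul_apply, smul_eq_mul]; ring
  rw [this, Real.sqrt_mul (sq_nonneg c), Real.sqrt_sq_eq_abs]

lemma coord_sq_le (v : ι → ℝ) (i : ι) : v i ^ 2 ≤ vnorm v ^ 2 := by
  rw [vnorm_sq]
  exact Finset.single_le_sum (fun j _ => sq_nonneg (v j)) (Finset.mem_univ i)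

lemma coord_le_one {v : ι → ℝ} (hv : vnorm v = 1) (i : ι) : |v i| ≤ 1 := by
  have := coord_sq_le v i
  rw [hv] at this
  nlinarith [abs_nonneg (v i), sq_abs (v i)]

lemma cauchy (u w : ι → ℝ) : |u ⬝ᵥ w| ≤ vnorm u * vnorm w := by
  have h1 : |u ⬝ᵥ w| ≤ ∑ i, |u i| * |w i| := by
    calc |u ⬝ᵥ w| ≤ ∑ i, |u i * w i| := Finset.abs_sum_le_sum_abs _ _
    _ = ∑ i, |u i| * |w i| := by simp [abs_mul]
  refine h1.trans ?_
  have := Real.sum_mul_le_sqrt_mul_sqrt Finset.univ (fun i => |u i|) (fun i => |w i|)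
  simpa [vnorm, sq_abs] using this

lemma quad_expand (A : Matrix ι ι ℝ) (v : ι → ℝ) :
    v ⬝ᵥ (A *ᵥ v) = ∑ i, ∑ j, v i * (A i j * v j) := by
  simp [dotProduct, Matrix.mulVec, Finset.mul_sum]

lemma quad_abs_bound (A : Matrix ι ι ℝ) (v : ι → ℝ) :
    |v ⬝ᵥ (A *ᵥ v)| ≤ ∑ i, ∑ j, |v i| * (|A i j| * |v j|) := by
  rw [quad_expand]
  calc |∑ i, ∑ j, v i * (A i j * v j)| ≤ ∑ i, |∑ j, v i * (A i j * v j)| :=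
        Finset.abs_sum_le_sum_abs _ _
  _ ≤ ∑ i, ∑ j, |v i * (A i j * v j)| :=
        Finset.sum_le_sum fun i _ => Finset.abs_sum_le_sum_abs _ _
  _ = ∑ i, ∑ j, |v i| * (|A i j| * |v j|) := by simp [abs_mul]

lemma quad_unit_bound (A : Matrix ι ι ℝ) {v : ι → ℝ} (hv : vnorm v = 1) :
    |v ⬝ᵥ (A *ᵥ v)| ≤ ∑ i, ∑ j, |A i j| := by
  refine (quad_abs_bound A v).trans ?_
  refine Finset.sum_le_sum fun i _ => Finset.sum_le_sum fun j _ => ?_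
  calc |v i| * (|A i j| * |v j|) ≤ 1 * (|A i j| * 1) := by
        refine mul_le_mul (coord_le_one hv i) ?_ (by positivity) zero_le_one
        exact mul_le_mul_of_nonneg_left (coord_le_one hv j) (abs_nonneg _)
  _ = |A i j| := by ring

lemma quad_smul (A : Matrix ι ι ℝ) (c : ℝ) (v : ι → ℝ) :
    (c • v) ⬝ᵥ (A *ᵥ (c • v)) = c * (c * (v ⬝ᵥ (A *ᵥ v))) := by
  rw [Matrix.mulVec_smul, dotProduct_smul, smul_dotProduct, smul_eq_mul, smul_eq_mul]

lemma v0norm_smul {c : ℝ} (hc : c ≠ 0) (v : ι → ℝ) : v0norm (c • v) = v0norm v := by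
  unfold v0norm
  rw [Function.support_const_smul_of_ne_zero c v hc]

lemma sup_bound_abs (A : Matrix ι ι ℝ) (v : ι → ℝ) (k : ℕ) (hv : v0norm v ≤ k) :
    |v ⬝ᵥ (A *ᵥ v)| ≤ vnorm v ^ 2 *
      sSup {x | ∃ ξ : ι → ℝ, vnorm ξ = 1 ∧ v0norm ξ ≤ k ∧ x = |ξ ⬝ᵥ (A *ᵥ ξ)|} := by
  by_cases h0 : v = 0
  · simp [h0, vnorm, zero_dotProduct]
  have hc : vnorm v ≠ 0 := fun h => h0 (vnorm_eq_zero h)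
  have hcpos : 0 < vnorm v := lt_of_le_of_ne (vnorm_nonneg v) (Ne.symm hc)
  set c : ℝ := vnorm v with hcdef
  set ξ : ι → ℝ := c⁻¹ • v with hξ
  have hξnorm : vnorm ξ = 1 := by
    rw [hξ, vnorm_smul, abs_of_pos (inv_pos.2 hcpos), inv_mul_cancel₀ hc]
  have hξ0 : v0norm ξ ≤ k := by rw [hξ, v0norm_smul (inv_ne_zero hc)]; exact hv
  have hmem : |ξ ⬝ᵥ (A *ᵥ ξ)| ∈
      {x | ∃ ξ : ι → ℝ, vnorm ξ = 1 ∧ v0norm ξ ≤ k ∧ x = |ξ ⬝ᵥ (A *ᵥ ξ)|} :=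
    ⟨ξ, hξnorm, hξ0, rfl⟩
  have hbdd : BddAbove {x | ∃ ξ : ι → ℝ, vnorm ξ = 1 ∧ v0norm ξ ≤ k ∧ x = |ξ ⬝ᵥ (A *ᵥ ξ)|} := by
    refine ⟨∑ i, ∑ j, |A i j|, fun x hx => ?_⟩
    obtain ⟨ζ, hζ1, _, rfl⟩ := hx
    exact quad_unit_bound A hζ1
  have hval : |ξ ⬝ᵥ (A *ᵥ ξ)| = c⁻¹ * (c⁻¹ * |v ⬝ᵥ (A *ᵥ v)|) := by
    rw [hξ, quad_smul, abs_mul, abs_mul, abs_of_pos (inv_pos.2 hcpos)]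
  have := mul_le_mul_of_nonneg_left (le_csSup hbdd hmem) (sq_nonneg c)
  refine le_trans ?_ this
  rw [hval,
    show c ^ 2 * (c⁻¹ * (c⁻¹ * |v ⬝ᵥ (A *ᵥ v)|)) = (c * c⁻¹) * (c * c⁻¹) * |v ⬝ᵥ (A *ᵥ v)| by ring,
    mul_inv_cancel₀ hc]
  simp

lemma sup_bound_psd (A : Matrix ι ι ℝ) (hpsd : ∀ ξ : ι → ℝ, 0 ≤ ξ ⬝ᵥ (A *ᵥ ξ))
    (v : ι → ℝ) (k : ℕ) (hv : v0norm v ≤ k) :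
    |v ⬝ᵥ (A *ᵥ v)| ≤ vnorm v ^ 2 *
      sSup {x | ∃ ξ : ι → ℝ, vnorm ξ = 1 ∧ v0norm ξ ≤ k ∧ x = ξ ⬝ᵥ (A *ᵥ ξ)} := by
  by_cases h0 : v = 0
  · simp [h0, vnorm, zero_dotProduct]
  have hc : vnorm v ≠ 0 := fun h => h0 (vnorm_eq_zero h)
  have hcpos : 0 < vnorm v := lt_of_le_of_ne (vnorm_nonneg v) (Ne.symm hc)
  set c : ℝ := vnorm v with hcdef
  set ξ : ι → ℝ := c⁻¹ • v with hξ
  have hξnorm : vnorm ξ = 1 := by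
    rw [hξ, vnorm_smul, abs_of_pos (inv_pos.2 hcpos), inv_mul_cancel₀ hc]
  have hξ0 : v0norm ξ ≤ k := by rw [hξ, v0norm_smul (inv_ne_zero hc)]; exact hv
  have hmem : ξ ⬝ᵥ (A *ᵥ ξ) ∈
      {x | ∃ ξ : ι → ℝ, vnorm ξ = 1 ∧ v0norm ξ ≤ k ∧ x = ξ ⬝ᵥ (A *ᵥ ξ)} :=
    ⟨ξ, hξnorm, hξ0, rfl⟩
  have hbdd : BddAbove {x | ∃ ξ : ι → ℝ, vnorm ξ = 1 ∧ v0norm ξ ≤ k ∧ x = ξ ⬝ᵥ (A *ᵥ ξ)} := by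
    refine ⟨∑ i, ∑ j, |A i j|, fun x hx => ?_⟩
    obtain ⟨ζ, hζ1, _, rfl⟩ := hx
    exact (le_abs_self _).trans (quad_unit_bound A hζ1)
  have hval : ξ ⬝ᵥ (A *ᵥ ξ) = c⁻¹ * (c⁻¹ * (v ⬝ᵥ (A *ᵥ v))) := by rw [hξ, quad_smul]
  have habs : |v ⬝ᵥ (A *ᵥ v)| = v ⬝ᵥ (A *ᵥ v) := abs_of_nonneg (hpsd v)
  have := mul_le_mul_of_nonneg_left (le_csSup hbdd hmem) (sq_nonneg c)
  refine le_trans ?_ this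
  rw [hval, habs]
  rw [show c ^ 2 * (c⁻¹ * (c⁻¹ * (v ⬝ᵥ (A *ᵥ v)))) = (c * c⁻¹) * (c * c⁻¹) * (v ⬝ᵥ (A *ᵥ v)) by ring,
    mul_inv_cancel₀ hc]
  simp

end SandwichAux

namespace SandwichAux

variable {ι : Type*} [Fintype ι]

lemma linf_bound (B : Matrix ι ι ℝ) (v : ι → ℝ) :
    |v ⬝ᵥ (B *ᵥ v)| ≤ v1norm v ^ 2 * (⨆ i, ⨆ j, |B i j|) := by
  rcases isEmpty_or_nonempty ι with h | h
  · simp [dotProduct, v1norm]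
  · set M := ⨆ i, ⨆ j, |B i j| with hMdef
    have hbddr : ∀ f : ι → ℝ, BddAbove (Set.range f) := fun f => (Set.finite_range f).bddAbove
    have hM : ∀ i j, |B i j| ≤ M := fun i j =>
      le_trans (le_ciSup (f := fun j => |B i j|) (hbddr _) j)
        (le_ciSup (f := fun i => ⨆ j, |B i j|) (hbddr _) i)
    calc |v ⬝ᵥ (B *ᵥ v)| ≤ ∑ i, ∑ j, |v i| * (|B i j| * |v j|) := quad_abs_bound B v
    _ ≤ ∑ i, ∑ j, |v i| * (M * |v j|) := by
        refine Finset.sum_le_sum fun i _ => Finset.sum_le_sum fun j _ => ?_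
        exact mul_le_mul_of_nonneg_left
          (mul_le_mul_of_nonneg_right (hM i j) (abs_nonneg _)) (abs_nonneg _)
    _ = v1norm v ^ 2 * M := by
        simp only [← Finset.mul_sum]
        rw [← Finset.sum_mul]
        unfold v1norm; ring

lemma dot_symm {A : Matrix ι ι ℝ} (h : A.IsSymm) (v w : ι → ℝ) :
    v ⬝ᵥ (A *ᵥ w) = w ⬝ᵥ (A *ᵥ v) := by
  rw [Matrix.dotProduct_mulVec, ← Matrix.mulVec_transpose, h.eq, dotProduct_comm]

end SandwichAux

open SandwichAux in
/-- Deterministic sandwich-variance decomposition (the core of the proof of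
Theorem 5.2): for sparse `θ̂, θ` and symmetric `Ω̂, Ω̃, Ω` with `Ω` positive
semidefinite,
`|θ̂'Ω̂θ̂ − θ'Ωθ| ≤ ‖θ̂‖²·sup_{‖ξ‖=1,‖ξ‖₀≤m}|ξ'(Ω̂−Ω̃)ξ| + ‖θ̂‖₁²·‖Ω̃−Ω‖_∞
  + ‖θ̂−θ‖²·sup_{‖ξ‖=1,‖ξ‖₀≤m'}ξ'Ωξ + 2‖Ωθ‖‖θ̂−θ‖`. -/
theorem statement_17 (p : ℕ) (θh θ : Fin p → ℝ) (m m' : ℕ)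
    (hθh : v0norm θh ≤ m) (hdiff : v0norm (θh - θ) ≤ m')
    (Ωh Ωt Ωm : Matrix (Fin p) (Fin p) ℝ)
    (hΩh : Ωh.IsSymm) (hΩt : Ωt.IsSymm) (hΩm : Ωm.IsSymm)
    (hpsd : ∀ ξ : Fin p → ℝ, 0 ≤ ξ ⬝ᵥ (Ωm *ᵥ ξ)) :
    |θh ⬝ᵥ (Ωh *ᵥ θh) - θ ⬝ᵥ (Ωm *ᵥ θ)| ≤
      vnorm θh ^ 2 *
        sSup {x | ∃ ξ : Fin p → ℝ, vnorm ξ = 1 ∧ v0norm ξ ≤ m ∧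
          x = |ξ ⬝ᵥ ((Ωh - Ωt) *ᵥ ξ)|}
      + v1norm θh ^ 2 * (⨆ i, ⨆ j, |(Ωt - Ωm) i j|)
      + vnorm (θh - θ) ^ 2 *
        sSup {x | ∃ ξ : Fin p → ℝ, vnorm ξ = 1 ∧ v0norm ξ ≤ m' ∧
          x = ξ ⬝ᵥ (Ωm *ᵥ ξ)}
      + 2 * vnorm (Ωm *ᵥ θ) * vnorm (θh - θ) := by
  have h1 : θ ⬝ᵥ (Ωm *ᵥ θh) = θh ⬝ᵥ (Ωm *ᵥ θ) := dot_symm hΩm θ θh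
  have h2 : (Ωm *ᵥ θ) ⬝ᵥ θh = θh ⬝ᵥ (Ωm *ᵥ θ) := dotProduct_comm _ _
  have h3 : (Ωm *ᵥ θ) ⬝ᵥ θ = θ ⬝ᵥ (Ωm *ᵥ θ) := dotProduct_comm _ _
  have key : θh ⬝ᵥ (Ωh *ᵥ θh) - θ ⬝ᵥ (Ωm *ᵥ θ) =
      θh ⬝ᵥ ((Ωh - Ωt) *ᵥ θh) + θh ⬝ᵥ ((Ωt - Ωm) *ᵥ θh)
      + (θh - θ) ⬝ᵥ (Ωm *ᵥ (θh - θ)) + 2 * ((Ωm *ᵥ θ) ⬝ᵥ (θh - θ)) := by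
    simp only [Matrix.sub_mulVec, Matrix.mulVec_sub, dotProduct_sub,
      sub_dotProduct]
    rw [h1, h2, h3]; ring
  have ha := sup_bound_abs (Ωh - Ωt) θh m hθh
  have hb := linf_bound (Ωt - Ωm) θh
  have hcc := sup_bound_psd Ωm hpsd (θh - θ) m' hdiff
  have he : |2 * ((Ωm *ᵥ θ) ⬝ᵥ (θh - θ))| ≤ 2 * vnorm (Ωm *ᵥ θ) * vnorm (θh - θ) := by
    rw [abs_mul, abs_two, mul_assoc]
    exact mul_le_mul_of_nonneg_left (cauchy _ _) (by norm_num)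
  rw [key]
  calc |θh ⬝ᵥ ((Ωh - Ωt) *ᵥ θh) + θh ⬝ᵥ ((Ωt - Ωm) *ᵥ θh)
      + (θh - θ) ⬝ᵥ (Ωm *ᵥ (θh - θ)) + 2 * ((Ωm *ᵥ θ) ⬝ᵥ (θh - θ))|
      ≤ |θh ⬝ᵥ ((Ωh - Ωt) *ᵥ θh) + θh ⬝ᵥ ((Ωt - Ωm) *ᵥ θh)
      + (θh - θ) ⬝ᵥ (Ωm *ᵥ (θh - θ))| + |2 * ((Ωm *ᵥ θ) ⬝ᵥ (θh - θ))| := abs_add_le _ _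
  _ ≤ (|θh ⬝ᵥ ((Ωh - Ωt) *ᵥ θh)| + |θh ⬝ᵥ ((Ωt - Ωm) *ᵥ θh)|
      + |(θh - θ) ⬝ᵥ (Ωm *ᵥ (θh - θ))|) + |2 * ((Ωm *ᵥ θ) ⬝ᵥ (θh - θ))| :=
      add_le_add_left (abs_add_three _ _ _) _
  _ ≤ _ := add_le_add (add_le_add (add_le_add ha hb) hcc) he
end
end

section
/- Nodewise KKT bound on the approximate-inverse error: let Z be an n×p real matrix (n = NMT), S an invertible diagonal p×p matrix with S_{kk} ≤ √(NM) for all k, and fix l. Suppose φ̂ ∈ ℝ^{p−1} satisfies the nodewise lasso KKT condition 2Z_{−l}'(Z_l − Z_{−l}φ̂) = μ_node·(NM)^{−1/2}S_{−l}·κ̂ for some subgradient vector κ̂ with ‖κ̂‖_∞ ≤ 1, and set τ̂² = (Z_l − Z_{−l}φ̂)'Z_l/(NM) with τ̂² > 0, and let Θ̂_l = Ĉ_l/τ̂² where Ĉ_l ∈ ℝ^p has 1 in position l and −φ̂ in the remaining positions. Then the l-th coordinate of the vector Θ̂_l'Z'Z/(NM) equals exactly 1, and every other coordinate k ≠ l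 satisfies |(Θ̂_l'Z'Z/(NM))_k| ≤ μ_node·S_{kk}/(2τ̂²·NM·√(NM)) ≤ μ_node/(2τ̂²·NM). Consequently ‖Θ̂_l'(Z'Z/(NM)) − e_l'‖_∞ ≤ μ_node/(2τ̂²·NM). -/
noncomputable section
open Matrix

lemma keyid_st18 (nr p : ℕ) (Z : Matrix (Fin nr) (Fin p) ℝ) (l k : Fin p) (φh : Fin p → ℝ) :
    (((Pi.single l 1 : Fin p → ℝ) - φh) ⬝ᵥ fun r' => (Zᵀ * Z) r' k)
      = (((fun r => Z r l) - Z *ᵥ φh) ⬝ᵥ fun r => Z r k) := by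
  simp only [dotProduct, Matrix.mul_apply, Matrix.mulVec, Matrix.transpose_apply,
    Pi.sub_apply, sub_mul, Finset.sum_sub_distrib, Finset.mul_sum, Finset.sum_mul]
  congr 1
  · simp [Pi.single_apply, Finset.sum_comm (γ := Fin nr)]
  · rw [Finset.sum_comm]
    exact Finset.sum_congr rfl fun _ _ => Finset.sum_congr rfl fun _ _ => by ring

/-- Nodewise lasso KKT bound on the approximate-inverse error: under the nodewise KKT
condition `2Z_{−l}'(Z_l − Z_{−l}φ̂) = μ_node (NM)^{-1/2} S_{−l} κ̂` with `‖κ̂‖_∞ ≤ 1`,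
`τ̂² = (Z_l − Z_{−l}φ̂)'Z_l/(NM) > 0` and `Θ̂_l = Ĉ_l/τ̂²`, the row vector
`w = Θ̂_l'Z'Z/(NM)` has `w_l = 1`,
`|w_k| ≤ μ_node S_{kk}/(2τ̂²·NM·√(NM)) ≤ μ_node/(2τ̂²·NM)` for `k ≠ l`, and
`‖w − e_l'‖_∞ ≤ μ_node/(2τ̂²·NM)`. -/
theorem statement_18 (nr p : ℕ) (NM : ℕ) (hNM : 0 < NM)
    (Z : Matrix (Fin nr) (Fin p) ℝ)
    (d : Fin p → ℝ) (hd : ∀ k, 0 < d k ∧ d k ≤ Real.sqrt NM)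
    (l : Fin p) (φh : Fin p → ℝ) (hφl : φh l = 0)
    (μnode : ℝ) (hμ : 0 ≤ μnode)
    (κh : Fin p → ℝ) (hκ : ∀ k, |κh k| ≤ 1)
    (hKKT : ∀ k, k ≠ l →
      2 * ((fun r => Z r k) ⬝ᵥ ((fun r => Z r l) - Z *ᵥ φh)) =
        μnode * (Real.sqrt NM)⁻¹ * d k * κh k)
    (τsq : ℝ)
    (hτdef : τsq = (((fun r => Z r l) - Z *ᵥ φh) ⬝ᵥ (fun r => Z r l)) / NM)
    (hτpos : 0 < τsq) :
    let Θl : Fin p → ℝ := τsq⁻¹ • ((Pi.single l 1 : Fin p → ℝ) - φh)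
    let w : Fin p → ℝ := fun k => (NM : ℝ)⁻¹ * (Θl ⬝ᵥ fun r' => (Zᵀ * Z) r' k)
    w l = 1 ∧
    (∀ k, k ≠ l →
      |w k| ≤ μnode * d k / (2 * τsq * NM * Real.sqrt NM) ∧
      μnode * d k / (2 * τsq * NM * Real.sqrt NM) ≤ μnode / (2 * τsq * NM)) ∧
    (⨆ k, |w k - (Pi.single l 1 : Fin p → ℝ) k|) ≤ μnode / (2 * τsq * NM) := by
  intro Θl w
  have hNM' : (0 : ℝ) < (NM : ℝ) := by exact_mod_cast hNM
  have hs : (0 : ℝ) < Real.sqrt NM := Real.sqrt_pos.mpr hNM'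
  have hkey : ∀ k, w k =
      (NM : ℝ)⁻¹ * (τsq⁻¹ * (((fun r => Z r l) - Z *ᵥ φh) ⬝ᵥ fun r => Z r k)) := by
    intro k
    show (NM : ℝ)⁻¹ * ((τsq⁻¹ • ((Pi.single l 1 : Fin p → ℝ) - φh)) ⬝ᵥ
      fun r' => (Zᵀ * Z) r' k) = _
    rw [smul_dotProduct, keyid_st18, smul_eq_mul]
  have hwl : w l = 1 := by
    rw [hkey l]
    have hdot : (((fun r => Z r l) - Z *ᵥ φh) ⬝ᵥ fun r => Z r l) = τsq * NM := by
      rw [hτdef]; field_simp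
    rw [hdot]
    field_simp
  have hwk : ∀ k, k ≠ l →
      w k = (μnode * d k / (2 * τsq * NM * Real.sqrt NM)) * κh k := by
    intro k hk
    rw [hkey k]
    have hdot : (((fun r => Z r l) - Z *ᵥ φh) ⬝ᵥ fun r => Z r k) =
        μnode * (Real.sqrt NM)⁻¹ * d k * κh k / 2 := by
      rw [dotProduct_comm]
      have := hKKT k hk
      linarith
    rw [hdot]
    field_simp
  have hboundk : ∀ k, k ≠ l →
      |w k| ≤ μnode * d k / (2 * τsq * NM * Real.sqrt NM) ∧
      μnode * d k / (2 * τsq * NM * Real.sqrt NM) ≤ μnode / (2 * τsq * NM) := by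
    intro k hk
    have hdk := hd k
    have hBnn : 0 ≤ μnode * d k / (2 * τsq * NM * Real.sqrt NM) :=
      div_nonneg (mul_nonneg hμ hdk.1.le) (by positivity)
    constructor
    · rw [hwk k hk, abs_mul, abs_of_nonneg hBnn]
      calc (μnode * d k / (2 * τsq * NM * Real.sqrt NM)) * |κh k|
          ≤ (μnode * d k / (2 * τsq * NM * Real.sqrt NM)) * 1 :=
            mul_le_mul_of_nonneg_left (hκ k) hBnn
        _ = μnode * d k / (2 * τsq * NM * Real.sqrt NM) := mul_one _
    · have heq : μnode * d k / (2 * τsq * NM * Real.sqrt NM) =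
          (μnode / (2 * τsq * NM)) * (d k / Real.sqrt NM) := by
        rw [div_mul_div_comm]
      rw [heq]
      have h1 : d k / Real.sqrt NM ≤ 1 := (div_le_one hs).mpr hdk.2
      have h2 : 0 ≤ μnode / (2 * τsq * NM) := by positivity
      calc (μnode / (2 * τsq * NM)) * (d k / Real.sqrt NM)
          ≤ (μnode / (2 * τsq * NM)) * 1 := mul_le_mul_of_nonneg_left h1 h2
        _ = μnode / (2 * τsq * NM) := mul_one _
  refine ⟨hwl, hboundk, ?_⟩
  have : Nonempty (Fin p) := ⟨l⟩
  refine ciSup_le fun k => ?_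
  by_cases hk : k = l
  · subst hk
    rw [hwl, Pi.single_eq_same]
    simp only [sub_self, abs_zero]
    positivity
  · rw [Pi.single_eq_of_ne hk, sub_zero]
    exact ((hboundk k hk).1).trans (hboundk k hk).2
end
end
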